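/- arXiv:1901.09631 — 4 statements merged into one kernel-verified Lean document; each statement's English description precedes it below -/
import Mathlib

section
/- For ζ > ξ > 0, μ, η, P > 0, the secrecy throughput D(E, τ) = τ(log(1 + ζE/τ) − log(1 + ξE/τ)) is jointly concave in (E, τ) on the region E ≥ 0, τ > 0. -/
/- `D(E, τ)` is the perspective `τ g(E / τ)` of `g x = log (1 + ζ x) - log (1 + ξ x)`, and
perspectives of concave functions are concave. Concavity of `g` on `x ≥ 0` holds because
`g' x = (ζ - ξ) / ((1 + ζ x) (1 + ξ x))` decreases there. -/

open Real Set

section Perspective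

variable {E : Type*} [AddCommGroup E] [Module ℝ E] {s : Set E}

lemma inv_smul_add_smul_eq {x₁ x₂ : E} {t₁ t₂ a b : ℝ} (ht₁ : t₁ ≠ 0) (ht₂ : t₂ ≠ 0)
    (ht : a * t₁ + b * t₂ ≠ 0) :
    (a * t₁ + b * t₂)⁻¹ • (a • x₁ + b • x₂) =
      (a * t₁ / (a * t₁ + b * t₂)) • (t₁⁻¹ • x₁) + (b * t₂ / (a * t₁ + b * t₂)) • (t₂⁻¹ • x₂) := by
  simp only [smul_add, smul_smul]
  congr 2 <;> field_simp

lemma ConcaveOn.perspective {g : E → ℝ} (hg : ConcaveOn ℝ s g) :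
    ConcaveOn ℝ {p : E × ℝ | 0 < p.2 ∧ p.2⁻¹ • p.1 ∈ s} (fun p => p.2 * g (p.2⁻¹ • p.1)) := by
  have mix_mem_and_le : ∀ ⦃x₁ x₂ : E⦄ ⦃t₁ t₂ : ℝ⦄, 0 < t₁ → 0 < t₂ →
      t₁⁻¹ • x₁ ∈ s → t₂⁻¹ • x₂ ∈ s → ∀ ⦃a b : ℝ⦄, 0 ≤ a → 0 ≤ b → a + b = 1 →
      0 < a * t₁ + b * t₂ ∧ (a * t₁ + b * t₂)⁻¹ • (a • x₁ + b • x₂) ∈ s ∧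
        a * (t₁ * g (t₁⁻¹ • x₁)) + b * (t₂ * g (t₂⁻¹ • x₂)) ≤
          (a * t₁ + b * t₂) * g ((a * t₁ + b * t₂)⁻¹ • (a • x₁ + b • x₂)) := by
    intro x₁ x₂ t₁ t₂ ht₁ ht₂ hx₁ hx₂ a b ha hb hab
    have ht : 0 < a * t₁ + b * t₂ := by simpa using convex_Ioi (0 : ℝ) ht₁ ht₂ ha hb hab
    have hw : a * t₁ / (a * t₁ + b * t₂) + b * t₂ / (a * t₁ + b * t₂) = 1 := by
      field_simp
    rw [inv_smul_add_smul_eq ht₁.ne' ht₂.ne' ht.ne']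
    refine ⟨ht, hg.1 hx₁ hx₂ (by positivity) (by positivity) hw, ?_⟩
    calc a * (t₁ * g (t₁⁻¹ • x₁)) + b * (t₂ * g (t₂⁻¹ • x₂))
        = (a * t₁ + b * t₂) * ((a * t₁ / (a * t₁ + b * t₂)) • g (t₁⁻¹ • x₁) +
            (b * t₂ / (a * t₁ + b * t₂)) • g (t₂⁻¹ • x₂)) := by
          simp only [smul_eq_mul]; field_simp
      _ ≤ _ := by
          gcongr
          exact hg.2 hx₁ hx₂ (by positivity) (by positivity) hw
  refine ⟨?_, ?_⟩
  · rintro ⟨x₁, t₁⟩ ⟨ht₁, hx₁⟩ ⟨x₂, t₂⟩ ⟨ht₂, hx₂⟩ a b ha hb hab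
    obtain ⟨ht, hx, -⟩ := mix_mem_and_le ht₁ ht₂ hx₁ hx₂ ha hb hab
    exact ⟨ht, hx⟩
  · rintro ⟨x₁, t₁⟩ ⟨ht₁, hx₁⟩ ⟨x₂, t₂⟩ ⟨ht₂, hx₂⟩ a b ha hb hab
    exact (mix_mem_and_le ht₁ ht₂ hx₁ hx₂ ha hb hab).2.2

end Perspective

lemma hasDerivAt_log_one_add_mul {c x : ℝ} (h : 1 + c * x ≠ 0) :
    HasDerivAt (fun y => log (1 + c * y)) (c / (1 + c * x)) x := by
  simpa using (((hasDerivAt_id x).const_mul c).const_add 1).log h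

lemma concaveOn_log_one_add_mul_sub_log_one_add_mul {ζ ξ : ℝ} (hξ : 0 ≤ ξ) (hξζ : ξ ≤ ζ) :
    ConcaveOn ℝ (Ici 0) (fun x => log (1 + ζ * x) - log (1 + ξ * x)) := by
  have hζ : 0 ≤ ζ := hξ.trans hξζ
  have hpos : ∀ {c x : ℝ}, 0 ≤ c → 0 ≤ x → 0 < 1 + c * x := fun hc hx => by positivity
  have hderiv : ∀ x ∈ Ici (0 : ℝ), HasDerivAt (fun x => log (1 + ζ * x) - log (1 + ξ * x))
      ((ζ - ξ) / ((1 + ζ * x) * (1 + ξ * x))) x := by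
    intro x hx
    have hζx := hpos hζ hx
    have hξx := hpos hξ hx
    refine ((hasDerivAt_log_one_add_mul hζx.ne').sub
      (hasDerivAt_log_one_add_mul hξx.ne')).congr_deriv ?_
    rw [div_sub_div _ _ hζx.ne' hξx.ne']
    ring
  refine AntitoneOn.concaveOn_of_deriv (convex_Ici 0)
    (fun x hx => (hderiv x hx).continuousAt.continuousWithinAt)
    (fun x hx => (hderiv x (interior_subset hx)).differentiableAt.differentiableWithinAt) ?_
  intro x hx y hy hxy
  rw [interior_Ici] at hx hy
  rw [(hderiv x (mem_Ici_of_Ioi hx)).deriv, (hderiv y (mem_Ici_of_Ioi hy)).deriv]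
  have hζx := hpos hζ hx.le
  have hξx := hpos hξ hx.le
  gcongr
  exact (hpos hζ hy.le).le

theorem secrecy_throughput_jointly_concave_general (ζ ξ : ℝ)
    (hξ : 0 < ξ) (hζξ : ξ < ζ) :
    ConcaveOn ℝ {p : ℝ × ℝ | 0 ≤ p.1 ∧ 0 < p.2}
      (fun p : ℝ × ℝ =>
        p.2 * Real.log (1 + ζ * p.1 / p.2) - p.2 * Real.log (1 + ξ * p.1 / p.2)) := by
  convert (concaveOn_log_one_add_mul_sub_log_one_add_mul hξ.le hζξ.le).perspective using 1
  · ext ⟨E, τ⟩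
    rw [Set.mem_ofPred_eq, Set.mem_ofPred_eq, and_comm]
    exact and_congr_right fun hτ => (mul_nonneg_iff_of_pos_left (inv_pos.2 hτ)).symm
  · funext ⟨E, τ⟩
    simp only [smul_eq_mul, mul_sub, mul_div_assoc, inv_mul_eq_div]

theorem secrecy_throughput_jointly_concave (ζ ξ μ η P : ℝ)
    (hξ : 0 < ξ) (hζξ : ξ < ζ) (hμ : 0 < μ) (hη : 0 < η) (hP : 0 < P) :
    ConcaveOn ℝ {p : ℝ × ℝ | 0 ≤ p.1 ∧ 0 < p.2}
      (fun p : ℝ × ℝ =>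
        p.2 * Real.log (1 + ζ * p.1 / p.2) - p.2 * Real.log (1 + ξ * p.1 / p.2)) :=
  secrecy_throughput_jointly_concave_general ζ ξ hξ hζξ
end

section
/- Consider the max-min secrecy problem: maximize min_i D_i(E_i) over nonnegative energies E_1,…,E_K satisfying Σ E_i = T, where each D_i is continuous, strictly increasing with D_i(0) = 0, each bounded above by finite limit L_i as E_i → ∞. Then the optimal value φ* is the unique φ ∈ [0, min_i L_i) such that Σ_i D_i⁻¹(φ) = T. -/
open Real Filter

theorem maxmin_optimal_value (K : ℕ) (hK : 0 < K) (T : ℝ) (hT : 0 < T)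
    (D : Fin K → ℝ → ℝ) (L : Fin K → ℝ) (Einv : Fin K → ℝ → ℝ)
    (hcont : ∀ i, ContinuousOn (D i) (Set.Ici 0))
    (hmono : ∀ i, StrictMonoOn (D i) (Set.Ici 0))
    (hzero : ∀ i, D i 0 = 0)
    (hlim : ∀ i, Tendsto (D i) atTop (nhds (L i)))
    (hsup : ∀ i, IsLUB ((D i) '' Set.Ici 0) (L i))
    (hinv : ∀ i, ∀ φ ∈ Set.Ico 0 (L i), 0 ≤ Einv i φ ∧ D i (Einv i φ) = φ)
    (hblow : Tendsto (fun φ => ∑ i, Einv i φ)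
      (nhdsWithin (sInf (Set.range L)) (Set.Iio (sInf (Set.range L)))) atTop) :
    ∃ φstar : ℝ,
      φstar ∈ Set.Ico 0 (sInf (Set.range L)) ∧
      (∑ i, Einv i φstar) = T ∧
      (∀ φ ∈ Set.Ico 0 (sInf (Set.range L)), (∑ i, Einv i φ) = T → φ = φstar) ∧
      IsGreatest {m : ℝ | ∃ E : Fin K → ℝ, (∀ i, 0 ≤ E i) ∧ (∑ i, E i) = T ∧
        m = sInf (Set.range fun i => D i (E i))} φstar := by
  haveI : Nonempty (Fin K) := Fin.pos_iff_nonempty.mp hK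
  set Lmin := sInf (Set.range L) with hLmin_def
  -- Lmin ≤ L i
  have hLle : ∀ i, Lmin ≤ L i := fun i =>
    csInf_le (Set.finite_range L).bddBelow ⟨i, rfl⟩
  -- Lmin > 0
  have hLpos : 0 < Lmin := by
    obtain ⟨j, hj⟩ := (Set.range_nonempty L).csInf_mem (Set.finite_range L)
    rw [hLmin_def, ← hj]
    have h1 : D j 1 ≤ L j := (hsup j).1 ⟨1, Set.mem_Ici.mpr zero_le_one, rfl⟩
    have h2 : D j 0 < D j 1 :=
      hmono j (Set.mem_Ici.mpr le_rfl) (Set.mem_Ici.mpr zero_le_one) zero_lt_one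
    rw [hzero j] at h2
    linarith
  -- inverse properties on [0, Lmin)
  have hE : ∀ i, ∀ φ ∈ Set.Ico 0 Lmin, 0 ≤ Einv i φ ∧ D i (Einv i φ) = φ := by
    intro i φ hφ
    exact hinv i φ ⟨hφ.1, lt_of_lt_of_le hφ.2 (hLle i)⟩
  -- Einv i is strictly monotone on [0, Lmin)
  have hEsm : ∀ i, StrictMonoOn (Einv i) (Set.Ico 0 Lmin) := by
    intro i x hx y hy hxy
    have hx' := hE i x hx
    have hy' := hE i y hy
    refine ((hmono i).lt_iff_lt (Set.mem_Ici.mpr hx'.1) (Set.mem_Ici.mpr hy'.1)).mp ?_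
    rw [hx'.2, hy'.2]; exact hxy
  -- sum is strictly monotone on [0, Lmin)
  have hsumlt : ∀ φ1 ∈ Set.Ico 0 Lmin, ∀ φ2 ∈ Set.Ico 0 Lmin, φ1 < φ2 →
      (∑ i, Einv i φ1) < ∑ i, Einv i φ2 := by
    intro φ1 h1 φ2 h2 hlt
    exact Finset.sum_lt_sum_of_nonempty Finset.univ_nonempty
      fun i _ => hEsm i h1 h2 hlt
  -- Einv i 0 = 0
  have hE0 : ∀ i, Einv i 0 = 0 := by
    intro i
    have h0 : (0 : ℝ) ∈ Set.Ico 0 Lmin := ⟨le_rfl, hLpos⟩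
    refine (hmono i).injOn (Set.mem_Ici.mpr (hE i 0 h0).1) (Set.mem_Ici.mpr le_rfl) ?_
    rw [(hE i 0 h0).2, hzero i]
  -- choose φ0 ∈ (0, Lmin) with T ≤ sum at φ0
  have h1 : ∀ᶠ φ in nhdsWithin Lmin (Set.Iio Lmin), T ≤ ∑ i, Einv i φ :=
    hblow.eventually_ge_atTop T
  have h2 : Set.Ioo 0 Lmin ∈ nhdsWithin Lmin (Set.Iio Lmin) :=
    Ioo_mem_nhdsLT_of_mem ⟨hLpos, le_rfl⟩
  obtain ⟨φ0, hφ0T, hφ0mem⟩ := (h1.and (eventually_of_mem h2 fun x hx => hx)).exists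
  set φ0' := (φ0 + Lmin) / 2 with hφ0'_def
  have hφ0φ0' : φ0 < φ0' := by rw [hφ0'_def]; linarith [hφ0mem.2]
  have hφ0'L : φ0' < Lmin := by rw [hφ0'_def]; linarith [hφ0mem.2]
  have hφ0'0 : 0 < φ0' := lt_trans hφ0mem.1 hφ0φ0'
  have hsub : Set.Icc 0 φ0' ⊆ Set.Ico 0 Lmin := fun x hx => ⟨hx.1, lt_of_le_of_lt hx.2 hφ0'L⟩
  have hφ0'mem : φ0' ∈ Set.Ico 0 Lmin := ⟨hφ0'0.le, hφ0'L⟩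
  -- key: for x ∈ [0, Einv i φ0'], Einv i (D i x) = x and D i x ∈ [0, φ0']
  have hkey : ∀ i, ∀ x : ℝ, 0 ≤ x → x ≤ Einv i φ0' →
      Einv i (D i x) = x ∧ D i x ∈ Set.Icc (0:ℝ) φ0' := by
    intro i x hx0 hxu
    have hDx0 : 0 ≤ D i x := by
      have := (hmono i).monotoneOn (Set.mem_Ici.mpr le_rfl) (Set.mem_Ici.mpr hx0) hx0
      rw [hzero i] at this; exact this
    have hEu := hE i φ0' hφ0'mem
    have hDxu : D i x ≤ φ0' := by
      have := (hmono i).monotoneOn (Set.mem_Ici.mpr hx0) (Set.mem_Ici.mpr hEu.1) hxu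
      rw [hEu.2] at this; exact this
    have hDmem : D i x ∈ Set.Ico 0 (L i) :=
      ⟨hDx0, lt_of_le_of_lt hDxu (lt_of_lt_of_le hφ0'L (hLle i))⟩
    have hEDx := hinv i (D i x) hDmem
    constructor
    · exact (hmono i).injOn (Set.mem_Ici.mpr hEDx.1) (Set.mem_Ici.mpr hx0) hEDx.2
    · exact ⟨hDx0, hDxu⟩
  have hsm' : ∀ i, StrictMonoOn (Einv i) (Set.Icc 0 φ0') := fun i => (hEsm i).mono hsub
  -- continuity of each Einv i on [0, φ0]
  have hcw : ∀ i, ContinuousOn (Einv i) (Set.Icc 0 φ0) := by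
    intro i a ha
    have ha' : a ∈ Set.Ico 0 Lmin := ⟨ha.1, lt_of_le_of_lt ha.2 (lt_trans hφ0φ0' hφ0'L)⟩
    have haφ0' : a < φ0' := lt_of_le_of_lt ha.2 hφ0φ0'
    have haIcc : a ∈ Set.Icc 0 φ0' := ⟨ha.1, haφ0'.le⟩
    -- right continuity
    have hr : ContinuousWithinAt (Einv i) (Set.Ici a) a := by
      refine (hsm' i).continuousWithinAt_right_of_exists_between
        (Icc_mem_nhdsGE_of_mem ⟨ha.1, haφ0'⟩) ?_
      intro b hb
      set x := min b (Einv i φ0') with hx_def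
      have hEa := hE i a ha'
      have hEφ0' := hE i φ0' hφ0'mem
      have hlt : Einv i a < Einv i φ0' := hEsm i ha' hφ0'mem haφ0'
      have hx1 : Einv i a < x := lt_min hb hlt
      have hx0 : 0 ≤ x := le_trans hEa.1 hx1.le
      have hxu : x ≤ Einv i φ0' := min_le_right _ _
      obtain ⟨heq, hmem⟩ := hkey i x hx0 hxu
      refine ⟨D i x, hmem, ?_⟩
      rw [heq]
      exact ⟨hx1, min_le_left _ _⟩
    rcases eq_or_lt_of_le ha.1 with h0a | h0a
    · -- a = 0 : only right continuity needed
      refine hr.mono ?_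
      rw [← h0a]
      exact fun x hx => hx.1
    · -- interior/right endpoint: also left continuity
      have hl : ContinuousWithinAt (Einv i) (Set.Iic a) a := by
        refine (hsm' i).continuousWithinAt_left_of_exists_between
          (Icc_mem_nhdsLE_of_mem ⟨h0a, haφ0'.le⟩) ?_
        intro b hb
        have hEa := hE i a ha'
        have hEapos : 0 < Einv i a := by
          refine ((hmono i).lt_iff_lt (Set.mem_Ici.mpr le_rfl)
            (Set.mem_Ici.mpr hEa.1)).mp ?_
          rw [hzero i, hEa.2]; exact h0a
        set x := max b 0 with hx_def
        have hx1 : x < Einv i a := max_lt hb hEapos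
        have hx0 : 0 ≤ x := le_max_right _ _
        have hlt : Einv i a < Einv i φ0' := hEsm i ha' hφ0'mem haφ0'
        have hxu : x ≤ Einv i φ0' := le_trans hx1.le hlt.le
        obtain ⟨heq, hmem⟩ := hkey i x hx0 hxu
        refine ⟨D i x, hmem, ?_⟩
        rw [heq]
        exact ⟨le_max_left _ _, hx1⟩
      have := hl.union hr
      rw [Set.Iic_union_Ici] at this
      exact this.mono (Set.subset_univ _)
  -- continuity of the sum
  have hfcont : ContinuousOn (fun φ => ∑ i, Einv i φ) (Set.Icc 0 φ0) :=
    continuousOn_finset_sum Finset.univ fun i _ => hcw i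
  -- sum at 0 is 0
  have hsum0 : (∑ i, Einv i 0) = 0 := Finset.sum_eq_zero fun i _ => hE0 i
  -- IVT
  have hivt := intermediate_value_Icc hφ0mem.1.le hfcont
  have hTmem : T ∈ Set.Icc ((fun φ => ∑ i, Einv i φ) 0) ((fun φ => ∑ i, Einv i φ) φ0) := by
    constructor
    · simp only [hsum0]; exact hT.le
    · exact hφ0T
  obtain ⟨φstar, hφstar_mem, hφstar_eq⟩ := hivt hTmem
  have hφstar_eq : (∑ i, Einv i φstar) = T := hφstar_eq
  have hstarmem : φstar ∈ Set.Ico 0 Lmin :=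
    ⟨hφstar_mem.1, lt_of_le_of_lt hφstar_mem.2 hφ0mem.2⟩
  refine ⟨φstar, hstarmem, hφstar_eq, ?_, ?_, ?_⟩
  · -- uniqueness
    intro φ hφ hφT
    by_contra hne
    rcases lt_or_gt_of_ne hne with h | h
    · have := hsumlt φ hφ φstar hstarmem h
      rw [hφT, hφstar_eq] at this
      exact lt_irrefl T this
    · have := hsumlt φstar hstarmem φ hφ h
      rw [hφT, hφstar_eq] at this
      exact lt_irrefl T this
  · -- membership in the feasible-value set
    refine ⟨fun i => Einv i φstar, fun i => (hE i φstar hstarmem).1, hφstar_eq, ?_⟩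
    have : (fun i => D i (Einv i φstar)) = fun _ => φstar :=
      funext fun i => (hE i φstar hstarmem).2
    rw [this, Set.range_const, csInf_singleton]
  · -- upper bound
    rintro m ⟨E, hEnn, hEsum, rfl⟩
    by_contra h
    push_neg at h
    have hlt : ∀ i, Einv i φstar < E i := by
      intro i
      have hle : sInf (Set.range fun i => D i (E i)) ≤ D i (E i) :=
        csInf_le (Set.finite_range _).bddBelow ⟨i, rfl⟩
      refine ((hmono i).lt_iff_lt (Set.mem_Ici.mpr (hE i φstar hstarmem).1)
        (Set.mem_Ici.mpr (hEnn i))).mp ?_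
      rw [(hE i φstar hstarmem).2]
      exact lt_of_lt_of_le h hle
    have : T < T := by
      calc T = ∑ i, Einv i φstar := hφstar_eq.symm
        _ < ∑ i, E i := Finset.sum_lt_sum_of_nonempty Finset.univ_nonempty fun i _ => hlt i
        _ = T := hEsum
    exact lt_irrefl T this
end

section
/- In the blinding problem, with positive channel gains h_j² and μ_j for j in an index set B, noise σ² > 0 and power P > 0, setting a_j = (1 + (σ²/P)(Σ_{l∈B} 1/μ_l − (1/h_j²)Σ_{l∈B} h_l²/μ_l)) / ((μ_j/h_j²)Σ_{l∈B} h_l²/μ_l) gives a solution with Σ_{j∈B} a_j = 1 and h_j²/(σ² + μ_j a_j P) equal to a common constant Φ for all j ∈ B. -/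
/-!
With `S = ∑ h_l²/μ_l`, `T = ∑ 1/μ_l` and `κ = (1 + (σ²/P) T) / S`, the weight rewrites as
`a_j = (h_j²/μ_j) κ - (σ²/P)/μ_j`. Summing gives `S κ - (σ²/P) T = 1`, and the noise cancels in
`σ² + μ_j a_j P = h_j² κ P`, so every ratio equals `1 / (κ P)`.
-/

open Finset

section BlindingWeights

variable {ι K : Type*} [Field K]

lemma blinding_weight_eq_affine {h μ c S T : K} (hh : h ≠ 0) (hμ : μ ≠ 0) (hS : S ≠ 0) :
    (1 + c * (T - 1 / h * S)) / (μ / h * S) = h / μ * ((1 + c * T) / S) - c / μ := by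
  field_simp
  ring

lemma sum_blinding_weights (B : Finset ι) (h2 μ : ι → K) (c : K)
    (hS : ∑ l ∈ B, h2 l / μ l ≠ 0) :
    ∑ j ∈ B, (h2 j / μ j * ((1 + c * ∑ l ∈ B, 1 / μ l) / ∑ l ∈ B, h2 l / μ l) - c / μ j) = 1 := by
  have hc : ∑ j ∈ B, c / μ j = c * ∑ l ∈ B, 1 / μ l := by
    rw [mul_sum]
    exact sum_congr rfl fun j _ => div_eq_mul_one_div c (μ j)
  rw [sum_sub_distrib, ← sum_mul, hc, mul_div_cancel₀ _ hS]
  ring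

lemma ratio_of_blinding_weight {h μ σ2 P κ : K} (hh : h ≠ 0) (hμ : μ ≠ 0) (hP : P ≠ 0) :
    h / (σ2 + μ * (h / μ * κ - σ2 / P / μ) * P) = (κ * P)⁻¹ := by
  have hden : σ2 + μ * (h / μ * κ - σ2 / P / μ) * P = h * (κ * P) := by
    field_simp
    ring
  rw [hden, div_mul_cancel_left₀ hh]

end BlindingWeights

theorem blinding_weights_equalize_general {ι : Type*} (B : Finset ι) (hB : B.Nonempty)
    (h2 μ : ι → ℝ) (hh : ∀ j ∈ B, 0 < h2 j) (hμ : ∀ j ∈ B, 0 < μ j)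
    (σ2 P : ℝ) (hP : 0 < P)
    (a : ι → ℝ)
    (ha : ∀ j ∈ B, a j =
      (1 + (σ2 / P) * ((∑ l ∈ B, 1 / μ l) - (1 / h2 j) * ∑ l ∈ B, h2 l / μ l)) /
        ((μ j / h2 j) * ∑ l ∈ B, h2 l / μ l)) :
    (∑ j ∈ B, a j) = 1 ∧
    ∃ Φ : ℝ, ∀ j ∈ B, h2 j / (σ2 + μ j * a j * P) = Φ := by
  set S := ∑ l ∈ B, h2 l / μ l
  set κ := (1 + σ2 / P * ∑ l ∈ B, 1 / μ l) / S
  have hS : S ≠ 0 := (sum_pos (fun l hl => div_pos (hh l hl) (hμ l hl)) hB).ne'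
  have ha' : ∀ j ∈ B, a j = h2 j / μ j * κ - σ2 / P / μ j := fun j hj =>
    (ha j hj).trans (blinding_weight_eq_affine (hh j hj).ne' (hμ j hj).ne' hS)
  refine ⟨?_, (κ * P)⁻¹, fun j hj => ?_⟩
  · rw [sum_congr rfl ha']
    exact sum_blinding_weights B h2 μ (σ2 / P) hS
  · rw [ha' j hj]
    exact ratio_of_blinding_weight (hh j hj).ne' (hμ j hj).ne' hP.ne'

theorem blinding_weights_equalize {ι : Type*} (B : Finset ι) (hB : B.Nonempty)
    (h2 μ : ι → ℝ) (hh : ∀ j ∈ B, 0 < h2 j) (hμ : ∀ j ∈ B, 0 < μ j)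
    (σ2 P : ℝ) (hσ : 0 < σ2) (hP : 0 < P)
    (a : ι → ℝ)
    (ha : ∀ j ∈ B, a j =
      (1 + (σ2 / P) * ((∑ l ∈ B, 1 / μ l) - (1 / h2 j) * ∑ l ∈ B, h2 l / μ l)) /
        ((μ j / h2 j) * ∑ l ∈ B, h2 l / μ l)) :
    (∑ j ∈ B, a j) = 1 ∧
    ∃ Φ : ℝ, ∀ j ∈ B, h2 j / (σ2 + μ j * a j * P) = Φ :=
  blinding_weights_equalize_general B hB h2 μ hh hμ σ2 P hP a ha
end

section
/- For the equalizing weights problem: if the a_j defined by a_j = (1 + (σ²/P)(Σ_{l∈B} 1/μ_l − (1/h_j²)Σ_{l∈B} h_l²/μ_l)) / ((μ_j/h_j²)Σ_{l∈B} h_l²/μ_l) are all nonnegative, then they constitute the optimal solution of minimizing max_{j∈B} h_j²/(σ² + μ_j a_j P) subject to Σ a_j = 1, a_j ≥ 0. -/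
/-!
The closed-form weights equalize all the costs `h2 j / (σ2 + μ j * a j * P)` at the common
value `S₂ / (P + σ2 * S₁)`, where `S₁ = ∑ 1 / μ l` and `S₂ = ∑ h2 l / μ l`, and they sum to `1`.
Each cost is antitone in its weight, so if some admissible `b` had a strictly smaller maximum
cost, every `b j` would strictly exceed `a j`, contradicting `∑ b = ∑ a = 1`.
-/

open Finset

theorem Finset.le_sup'_of_equalizing {ι α β : Type*} [AddCommMonoid α] [LinearOrder α]
    [IsOrderedCancelAddMonoid α] [LinearOrder β] {s : Finset ι} (hs : s.Nonempty)
    {g : ι → α → β} {D : ι → Set α} (hg : ∀ j ∈ s, AntitoneOn (g j) (D j))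
    {a b : ι → α} (ha : ∀ j ∈ s, a j ∈ D j) (hb : ∀ j ∈ s, b j ∈ D j)
    (hsum : ∑ j ∈ s, b j ≤ ∑ j ∈ s, a j) {K : β} (hK : ∀ j ∈ s, g j (a j) = K) :
    K ≤ s.sup' hs (fun j => g j (b j)) := by
  by_contra! hlt
  have hab : ∀ j ∈ s, a j < b j := fun j hj =>
    (hg j hj).reflect_lt (hb j hj) (ha j hj)
      ((s.sup'_lt_iff hs).1 hlt j hj |>.trans_eq (hK j hj).symm)
  exact (sum_lt_sum_of_nonempty hs hab).not_ge hsum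

theorem antitoneOn_div_add_mul_mul {h μ σ2 P : ℝ} (hh : 0 ≤ h) (hμ : 0 ≤ μ) (hP : 0 ≤ P) :
    AntitoneOn (fun x => h / (σ2 + μ * x * P)) {x | 0 < σ2 + μ * x * P} :=
  fun _ hx _ _ hxy => div_le_div_of_nonneg_left hh hx (by gcongr)

theorem equalizing_denominator {h μ σ2 P S₁ S₂ : ℝ} (hh : h ≠ 0) (hμ : μ ≠ 0) (hP : P ≠ 0)
    (hS₂ : S₂ ≠ 0) :
    σ2 + μ * ((1 + σ2 / P * (S₁ - 1 / h * S₂)) / (μ / h * S₂)) * P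
      = h * (P + σ2 * S₁) / S₂ := by
  field_simp
  ring

theorem sum_equalizing_weights {ι : Type*} (B : Finset ι) {h2 μ : ι → ℝ}
    (hh : ∀ j ∈ B, h2 j ≠ 0) (hμ : ∀ j ∈ B, μ j ≠ 0) {σ2 P : ℝ} (hP : P ≠ 0)
    (hS₂ : ∑ l ∈ B, h2 l / μ l ≠ 0) :
    ∑ j ∈ B, (1 + σ2 / P * ((∑ l ∈ B, 1 / μ l) - 1 / h2 j * ∑ l ∈ B, h2 l / μ l)) /
        (μ j / h2 j * ∑ l ∈ B, h2 l / μ l) = 1 := by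
  set S₁ := ∑ l ∈ B, 1 / μ l
  set S₂ := ∑ l ∈ B, h2 l / μ l
  have hsplit : ∀ j ∈ B, (1 + σ2 / P * (S₁ - 1 / h2 j * S₂)) / (μ j / h2 j * S₂)
      = h2 j / μ j * ((P + σ2 * S₁) / (P * S₂)) - 1 / μ j * (σ2 / P) := by
    intro j hj
    have := hh j hj
    have := hμ j hj
    field_simp
    ring
  rw [sum_congr rfl hsplit, sum_sub_distrib, ← sum_mul, ← sum_mul]
  field_simp
  ring

theorem blinding_weights_optimal_general {ι : Type*} (B : Finset ι) (hB : B.Nonempty)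
    (h2 μ : ι → ℝ) (hh : ∀ j ∈ B, 0 < h2 j) (hμ : ∀ j ∈ B, 0 < μ j)
    (σ2 P : ℝ) (hσ : 0 < σ2) (hP : 0 < P)
    (a : ι → ℝ)
    (ha : ∀ j ∈ B, a j =
      (1 + (σ2 / P) * ((∑ l ∈ B, 1 / μ l) - (1 / h2 j) * ∑ l ∈ B, h2 l / μ l)) /
        ((μ j / h2 j) * ∑ l ∈ B, h2 l / μ l)) :
    ∀ b : ι → ℝ, (∀ j ∈ B, 0 ≤ b j) → (∑ j ∈ B, b j) = 1 →
      B.sup' hB (fun j => h2 j / (σ2 + μ j * a j * P)) ≤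
        B.sup' hB (fun j => h2 j / (σ2 + μ j * b j * P)) := by
  intro b hb hbsum
  set S₁ := ∑ l ∈ B, 1 / μ l
  set S₂ := ∑ l ∈ B, h2 l / μ l
  have hS₁ : 0 < S₁ := sum_pos (fun l hl => one_div_pos.2 (hμ l hl)) hB
  have hS₂ : 0 < S₂ := sum_pos (fun l hl => div_pos (hh l hl) (hμ l hl)) hB
  have hden : ∀ j ∈ B, σ2 + μ j * a j * P = h2 j * (P + σ2 * S₁) / S₂ := fun j hj => by
    rw [ha j hj, equalizing_denominator (hh j hj).ne' (hμ j hj).ne' hP.ne' hS₂.ne']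
  have hcost : ∀ j ∈ B, h2 j / (σ2 + μ j * a j * P) = S₂ / (P + σ2 * S₁) := fun j hj => by
    have := hh j hj
    rw [hden j hj]
    field_simp
  have hsum_a : ∑ j ∈ B, a j = 1 := by
    rw [sum_congr rfl ha]
    exact sum_equalizing_weights B (fun j hj => (hh j hj).ne') (fun j hj => (hμ j hj).ne')
      hP.ne' hS₂.ne'
  rw [sup'_congr hB rfl hcost, sup'_const]
  refine le_sup'_of_equalizing hB
    (fun j hj => antitoneOn_div_add_mul_mul (hh j hj).le (hμ j hj).le hP.le)
    (fun j hj => ?_) (fun j hj => ?_) (hbsum.trans hsum_a.symm).le hcost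
  · have := hh j hj
    rw [Set.mem_ofPred_eq, hden j hj]
    positivity
  · have := hμ j hj
    have := hb j hj
    exact show 0 < σ2 + μ j * b j * P by positivity

theorem blinding_weights_optimal {ι : Type*} (B : Finset ι) (hB : B.Nonempty)
    (h2 μ : ι → ℝ) (hh : ∀ j ∈ B, 0 < h2 j) (hμ : ∀ j ∈ B, 0 < μ j)
    (σ2 P : ℝ) (hσ : 0 < σ2) (hP : 0 < P)
    (a : ι → ℝ)
    (ha : ∀ j ∈ B, a j =
      (1 + (σ2 / P) * ((∑ l ∈ B, 1 / μ l) - (1 / h2 j) * ∑ l ∈ B, h2 l / μ l)) /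
        ((μ j / h2 j) * ∑ l ∈ B, h2 l / μ l))
    (hnonneg : ∀ j ∈ B, 0 ≤ a j) :
    ∀ b : ι → ℝ, (∀ j ∈ B, 0 ≤ b j) → (∑ j ∈ B, b j) = 1 →
      B.sup' hB (fun j => h2 j / (σ2 + μ j * a j * P)) ≤
        B.sup' hB (fun j => h2 j / (σ2 + μ j * b j * P)) :=
  blinding_weights_optimal_general B hB h2 μ hh hμ σ2 P hσ hP a ha
end
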